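/- Let L = 𝕃(V ⊕ W ⊕ s(V⊗W)) with the derivations σ_A for A ∈ 𝕃(V ⊕ W). For all A, B ∈ 𝕃(V), the derivations σ_A and σ_B commute in the graded sense: [σ_A, σ_B] = 0 in Der(L); equivalently, σ_A σ_B (X) = (−1)^{(|A|+1)(|B|+1)} σ_B σ_A (X) for every X ∈ L. -/

import Mathlib

/-!
The graded commutator `D = σ_A σ_B - (-1)^{(|A|+1)(|B|+1)} σ_B σ_A` of two derivations is again
a derivation, so it vanishes as soon as it vanishes on the generators `V`, `W`, `s(V⊗W)` of `L`.
Each `σ_v` kills `𝕃(V)`, hence `σ_C v = ±σ_v C = 0` for `C ∈ 𝕃(V)`, and `σ_C` kills all of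
`𝕃(V ⊕ s(V⊗W))`. On the other hand `σ_w` maps `𝕃(V)` into `𝕃(V ⊕ s(V⊗W))`, so
`σ_C w = ±σ_w C` lies there. Thus both `σ_A σ_B` and `σ_B σ_A` kill every generator.
-/

universe u

/-- A graded Lie algebra over `ℚ`: a `ℤ`-graded vector space with a bilinear bracket
satisfying graded antisymmetry and the graded Jacobi identity on homogeneous elements. -/
structure GLA (Lc : Type u) [AddCommGroup Lc] [Module ℚ Lc] where
  grade : ℤ → Submodule ℚ Lc
  internal : DirectSum.IsInternal grade
  br : Lc →ₗ[ℚ] Lc →ₗ[ℚ] Lc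
  br_mem : ∀ {i j : ℤ} {x y : Lc}, x ∈ grade i → y ∈ grade j → br x y ∈ grade (i + j)
  antisymm : ∀ {i j : ℤ} {x y : Lc}, x ∈ grade i → y ∈ grade j →
      br x y = -((-1 : ℚ) ^ (i * j) • br y x)
  jacobi : ∀ {i j : ℤ} {x y : Lc} (z : Lc), x ∈ grade i → y ∈ grade j →
      br x (br y z) = br (br x y) z + (-1 : ℚ) ^ (i * j) • br y (br x z)

namespace GLA

variable {Lc : Type u} [AddCommGroup Lc] [Module ℚ Lc]

/-- The Lie subalgebra (as a submodule closed under the bracket) generated by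
a graded family of subspaces. -/
def lieSub (G : GLA Lc) (p : ℤ → Submodule ℚ Lc) : Submodule ℚ Lc :=
  sInf {q | (∀ i, p i ≤ q) ∧ ∀ x ∈ q, ∀ y ∈ q, G.br x y ∈ q}

/-- The submodule of decomposable elements of `L`: the span of all brackets. -/
def dec (G : GLA Lc) : Submodule ℚ Lc :=
  Submodule.span ℚ {x : Lc | ∃ a b : Lc, x = G.br a b}

/-- A graded Lie algebra is reduced if it vanishes in degrees `≤ 0`. -/
def Reduced (G : GLA Lc) : Prop := ∀ i : ℤ, i ≤ 0 → G.grade i = ⊥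

end GLA

namespace GLA

variable {Lc : Type u} [AddCommGroup Lc] [Module ℚ Lc] (G : GLA Lc)

theorem lieSub_le {p : ℤ → Submodule ℚ Lc} {q : Submodule ℚ Lc} (hpq : ∀ i, p i ≤ q)
    (hq : ∀ x ∈ q, ∀ y ∈ q, G.br x y ∈ q) : G.lieSub p ≤ q :=
  sInf_le ⟨hpq, hq⟩

theorem le_lieSub (p : ℤ → Submodule ℚ Lc) (i : ℤ) : p i ≤ G.lieSub p :=
  le_sInf fun _ hq => hq.1 i

theorem br_mem_lieSub {p : ℤ → Submodule ℚ Lc} {x y : Lc} (hx : x ∈ G.lieSub p)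
    (hy : y ∈ G.lieSub p) : G.br x y ∈ G.lieSub p := by
  rw [lieSub, Submodule.mem_sInf] at *
  exact fun q hq => hq.2 x (hx q hq) y (hy q hq)

theorem lieSub_mono {p p' : ℤ → Submodule ℚ Lc} (h : ∀ i, p i ≤ p' i) :
    G.lieSub p ≤ G.lieSub p' :=
  G.lieSub_le (fun i => (h i).trans (G.le_lieSub p' i)) fun _ hx _ hy => G.br_mem_lieSub hx hy

theorem br_mem_span_of_br_mem {s : Set Lc} (hs : ∀ x ∈ s, ∀ y ∈ s, G.br x y ∈ s) {x y : Lc}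
    (hx : x ∈ Submodule.span ℚ s) (hy : y ∈ Submodule.span ℚ s) :
    G.br x y ∈ Submodule.span ℚ s := by
  have h := Submodule.apply_mem_map₂ G.br hx hy
  rw [Submodule.map₂_span_span] at h
  exact Submodule.span_le.mpr
    (Set.image2_subset_iff.mpr fun x hx y hy => Submodule.subset_span (hs x hx y hy)) h

def IsDerivation (d : ℤ) (f : Lc →ₗ[ℚ] Lc) : Prop :=
  ∀ ⦃n : ℤ⦄ (x y : Lc), x ∈ G.grade n →
    f (G.br x y) = G.br (f x) y + (-1 : ℚ) ^ (d * n) • G.br x (f y)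

variable {G}

theorem IsDerivation.lieSub_le_comap {d : ℤ} {f : Lc →ₗ[ℚ] Lc} (hf : G.IsDerivation d f)
    {p : ℤ → Submodule ℚ Lc} (hp : ∀ i, p i ≤ G.grade i) {T : Submodule ℚ Lc}
    (hTl : ∀ x ∈ T, ∀ y ∈ G.lieSub p, G.br x y ∈ T)
    (hTr : ∀ x ∈ G.lieSub p, ∀ y ∈ T, G.br x y ∈ T)
    (hgen : ∀ i, p i ≤ T.comap f) : G.lieSub p ≤ T.comap f := by
  -- the Leibniz rule only applies to homogeneous elements, so we work with their span
  set s : Set Lc := {x | ∃ n, x ∈ G.grade n ∧ x ∈ G.lieSub p ∧ f x ∈ T}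
  have hs : ∀ x ∈ s, ∀ y ∈ s, G.br x y ∈ s := by
    rintro x ⟨m, hxm, hxp, hfx⟩ y ⟨n, hyn, hyp, hfy⟩
    refine ⟨m + n, G.br_mem hxm hyn, G.br_mem_lieSub hxp hyp, ?_⟩
    rw [hf x y hxm]
    exact add_mem (hTl _ hfx _ hyp) (T.smul_mem _ (hTr _ hxp _ hfy))
  have hspan : Submodule.span ℚ s ≤ T.comap f :=
    Submodule.span_le.mpr fun _ ⟨_, _, _, hfx⟩ => hfx
  refine le_trans (G.lieSub_le (fun i x hx => ?_) fun x hx y hy =>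
    G.br_mem_span_of_br_mem hs hx hy) hspan
  exact Submodule.subset_span ⟨i, hp i hx, G.le_lieSub p i hx, hgen i hx⟩

theorem IsDerivation.lieSub_le_ker {d : ℤ} {f : Lc →ₗ[ℚ] Lc} (hf : G.IsDerivation d f)
    {p : ℤ → Submodule ℚ Lc} (hp : ∀ i, p i ≤ G.grade i) (hgen : ∀ i, p i ≤ LinearMap.ker f) :
    G.lieSub p ≤ LinearMap.ker f := by
  rw [← Submodule.comap_bot] at hgen ⊢
  refine hf.lieSub_le_comap hp ?_ ?_ hgen
  · intro x hx y _
    simp [(Submodule.mem_bot ℚ).mp hx]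
  · intro x _ y hy
    simp [(Submodule.mem_bot ℚ).mp hy]

theorem IsDerivation.lieSub_le_comap_lieSub {d : ℤ} {f : Lc →ₗ[ℚ] Lc}
    (hf : G.IsDerivation d f) {p q : ℤ → Submodule ℚ Lc} (hp : ∀ i, p i ≤ G.grade i)
    (hpq : G.lieSub p ≤ G.lieSub q) (hgen : ∀ i, p i ≤ (G.lieSub q).comap f) :
    G.lieSub p ≤ (G.lieSub q).comap f :=
  hf.lieSub_le_comap hp (fun _ hx _ hy => G.br_mem_lieSub hx (hpq hy))
    (fun _ hx _ hy => G.br_mem_lieSub (hpq hx) hy) hgen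

theorem IsDerivation.eq_zero_of_le_ker {d : ℤ} {f : Lc →ₗ[ℚ] Lc} (hf : G.IsDerivation d f)
    {p : ℤ → Submodule ℚ Lc} (hp : ∀ i, p i ≤ G.grade i) (htop : G.lieSub p = ⊤)
    (hgen : ∀ i, p i ≤ LinearMap.ker f) : f = 0 :=
  LinearMap.ker_eq_top.mp (top_le_iff.mp (htop ▸ hf.lieSub_le_ker hp hgen))

theorem IsDerivation.commutator {d e : ℤ} {f g : Lc →ₗ[ℚ] Lc}
    (hf : G.IsDerivation d f) (hg : G.IsDerivation e g)
    (hf_grade : ∀ {n : ℤ} {x : Lc}, x ∈ G.grade n → f x ∈ G.grade (n + d))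
    (hg_grade : ∀ {n : ℤ} {x : Lc}, x ∈ G.grade n → g x ∈ G.grade (n + e)) :
    G.IsDerivation (d + e) (f ∘ₗ g - (-1 : ℚ) ^ (d * e) • (g ∘ₗ f)) := by
  intro n x y hx
  set ε : ℚ := (-1 : ℚ) ^ (d * e)
  have hsign : ∀ k m : ℤ, (-1 : ℚ) ^ (k + m) = (-1 : ℚ) ^ k * (-1 : ℚ) ^ m :=
    zpow_add₀ (by norm_num)
  have hε : ε * ε = 1 := by
    rw [← hsign, ← two_mul, zpow_mul]
    norm_num
  have hfg : (-1 : ℚ) ^ (d * (n + e)) = ε * (-1 : ℚ) ^ (d * n) := by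
    rw [mul_add, add_comm, hsign]
  have hgf : (-1 : ℚ) ^ (e * (n + d)) = ε * (-1 : ℚ) ^ (e * n) := by
    rw [mul_add, add_comm, mul_comm e d, hsign]
  simp only [LinearMap.sub_apply, LinearMap.comp_apply, LinearMap.smul_apply]
  rw [hg x y hx, hf x y hx, map_add, map_smul, map_add, map_smul, hf _ y (hg_grade hx),
    hf x _ hx, hg _ y (hf_grade hx), hg x _ hx, hfg, hgf, add_mul, hsign]
  simp only [map_sub, map_smul, LinearMap.sub_apply, LinearMap.smul_apply]
  rcases mul_self_eq_one_iff.mp hε with h | h <;> rw [h] <;> match_scalars <;> ring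

end GLA

theorem statement7_general
    {Lc : Type u} [AddCommGroup Lc] [Module ℚ Lc] (G : GLA Lc)
    (V W Sp : ℤ → Submodule ℚ Lc)
    (hV : ∀ i, V i ≤ G.grade i) (hW : ∀ i, W i ≤ G.grade i) (hSp : ∀ i, Sp i ≤ G.grade i)
    -- the suspension `s(v ⊗ w)`, bilinear, of degree `|v|+|w|+1`
    (sus : Lc →ₗ[ℚ] Lc →ₗ[ℚ] Lc)
    (hsus : ∀ {i j : ℤ} {v w : Lc}, v ∈ V i → w ∈ W j → sus v w ∈ Sp (i + j + 1))
    -- `L = 𝕃(V ⊕ W ⊕ s(V ⊗ W))` is generated by `V ⊕ W ⊕ s(V ⊗ W)`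
    (hgen : G.lieSub (fun i => V i ⊔ W i ⊔ Sp i) = ⊤)
    -- the derivations `σ_A` for homogeneous `A ∈ 𝕃(V ⊕ W)`: `σ_A` has degree `|A| + 1`,
    -- `σ_v(w) = s(v⊗w)`, `σ_w(v) = (-1)^{|v||w|} s(v⊗w)`, `σ_v(v') = σ_w(w') = 0`,
    -- `σ_v`, `σ_w` vanish on `s(V⊗W)`, and on generators
    -- `σ_A(v) = (-1)^{|v||A|} σ_v(A)`, `σ_A(w) = (-1)^{|w||A|} σ_w(A)`, `σ_A(s(v⊗w)) = 0`
    (sg : ℤ → Lc → (Lc →ₗ[ℚ] Lc))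
    (hsg_grade : ∀ {a : ℤ} {A : Lc}, A ∈ G.lieSub (fun i => V i ⊔ W i) → A ∈ G.grade a →
      ∀ {n : ℤ} {x : Lc}, x ∈ G.grade n → sg a A x ∈ G.grade (n + a + 1))
    (hsg_der : ∀ {a : ℤ} {A : Lc}, A ∈ G.lieSub (fun i => V i ⊔ W i) → A ∈ G.grade a →
      ∀ {n : ℤ} (x y : Lc), x ∈ G.grade n →
      sg a A (G.br x y) = G.br (sg a A x) y + (-1 : ℚ) ^ ((a + 1) * n) • G.br x (sg a A y))
    (hsg_wv : ∀ {i j : ℤ} {v w : Lc}, v ∈ V i → w ∈ W j →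
      sg j w v = (-1 : ℚ) ^ (i * j) • sus v w)
    (hsg_vv : ∀ {i i' : ℤ} {v v' : Lc}, v ∈ V i → v' ∈ V i' → sg i v v' = 0)
    (hsg_Av : ∀ {a : ℤ} {A : Lc}, A ∈ G.lieSub (fun i => V i ⊔ W i) → A ∈ G.grade a →
      ∀ {i : ℤ} {v : Lc}, v ∈ V i → sg a A v = (-1 : ℚ) ^ (i * a) • sg i v A)
    (hsg_Aw : ∀ {a : ℤ} {A : Lc}, A ∈ G.lieSub (fun i => V i ⊔ W i) → A ∈ G.grade a →
      ∀ {j : ℤ} {w : Lc}, w ∈ W j → sg a A w = (-1 : ℚ) ^ (j * a) • sg j w A)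
    (hsg_AS : ∀ {a : ℤ} {A : Lc}, A ∈ G.lieSub (fun i => V i ⊔ W i) → A ∈ G.grade a →
      ∀ {k : ℤ} {x : Lc}, x ∈ Sp k → sg a A x = 0)
 :
    ∀ {a : ℤ} {A : Lc}, A ∈ G.lieSub V → A ∈ G.grade a →
    ∀ {b : ℤ} {B : Lc}, B ∈ G.lieSub V → B ∈ G.grade b →
      (∀ X : Lc, sg a A (sg b B X) = (-1 : ℚ) ^ ((a + 1) * (b + 1)) • sg b B (sg a A X)) ∧
      (sg a A ∘ₗ sg b B - (-1 : ℚ) ^ ((a + 1) * (b + 1)) • (sg b B ∘ₗ sg a A) = 0) := by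
  intro a A hA hAg b B hB hBg
  set VW : ℤ → Submodule ℚ Lc := fun i => V i ⊔ W i
  set VS : ℤ → Submodule ℚ Lc := fun i => V i ⊔ Sp i
  have hV_VW : G.lieSub V ≤ G.lieSub VW := G.lieSub_mono fun _ => le_sup_left
  have hV_VS : G.lieSub V ≤ G.lieSub VS := G.lieSub_mono fun _ => le_sup_left
  have hder : ∀ {c C}, C ∈ G.lieSub VW → C ∈ G.grade c → G.IsDerivation (c + 1) (sg c C) :=
    fun hC hCg _ => hsg_der hC hCg
  have hσv : ∀ {i v}, v ∈ V i → G.lieSub V ≤ LinearMap.ker (sg i v) := fun hv =>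
    (hder (G.le_lieSub VW _ (Submodule.mem_sup_left hv)) (hV _ hv)).lieSub_le_ker hV
      fun _ _ hv' => hsg_vv hv hv'
  have hσw : ∀ {j w}, w ∈ W j → G.lieSub V ≤ (G.lieSub VS).comap (sg j w) := fun hw =>
    (hder (G.le_lieSub VW _ (Submodule.mem_sup_right hw)) (hW _ hw)).lieSub_le_comap_lieSub hV
      hV_VS fun _ _ hv => by
        rw [Submodule.mem_comap, hsg_wv hv hw]
        exact Submodule.smul_mem _ _ (G.le_lieSub VS _ (Submodule.mem_sup_right (hsus hv hw)))
  have hσC_V : ∀ {c C}, C ∈ G.lieSub V → C ∈ G.grade c → ∀ {i v}, v ∈ V i → sg c C v = 0 :=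
    fun hC hCg _ _ hv => by rw [hsg_Av (hV_VW hC) hCg hv, hσv hv hC, smul_zero]
  have hσC_VS : ∀ {c C}, C ∈ G.lieSub V → C ∈ G.grade c →
      G.lieSub VS ≤ LinearMap.ker (sg c C) := fun hC hCg =>
    (hder (hV_VW hC) hCg).lieSub_le_ker (fun i => sup_le (hV i) (hSp i)) fun _ x hx => by
      obtain ⟨v, hv, z, hz, rfl⟩ := Submodule.mem_sup.mp hx
      rw [LinearMap.mem_ker, map_add, hσC_V hC hCg hv, hsg_AS (hV_VW hC) hCg hz, add_zero]
  have hσC_gen : ∀ {c C}, C ∈ G.lieSub V → C ∈ G.grade c →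
      ∀ i, V i ⊔ W i ⊔ Sp i ≤ (G.lieSub VS).comap (sg c C) := by
    intro c C hC hCg i x hx
    obtain ⟨y, hy, z, hz, rfl⟩ := Submodule.mem_sup.mp hx
    obtain ⟨v, hv, w, hw, rfl⟩ := Submodule.mem_sup.mp hy
    rw [Submodule.mem_comap, map_add, map_add, hσC_V hC hCg hv, hsg_Aw (hV_VW hC) hCg hw,
      hsg_AS (hV_VW hC) hCg hz, zero_add, add_zero]
    exact Submodule.smul_mem _ _ (hσw hw hC)
  have hgrade : ∀ {c C}, C ∈ G.lieSub V → C ∈ G.grade c →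
      ∀ {n x}, x ∈ G.grade n → sg c C x ∈ G.grade (n + (c + 1)) := fun hC hCg _ _ hx => by
    simpa only [add_assoc] using hsg_grade (hV_VW hC) hCg hx
  set D := sg a A ∘ₗ sg b B - (-1 : ℚ) ^ ((a + 1) * (b + 1)) • (sg b B ∘ₗ sg a A)
  have hD_gen : ∀ i, V i ⊔ W i ⊔ Sp i ≤ LinearMap.ker D := fun i x hx => by
    have hAB := LinearMap.mem_ker.mp (hσC_VS hA hAg (hσC_gen hB hBg i hx))
    have hBA := LinearMap.mem_ker.mp (hσC_VS hB hBg (hσC_gen hA hAg i hx))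
    simp [D, hAB, hBA]
  have hD0 : D = 0 :=
    ((hder (hV_VW hA) hAg).commutator (hder (hV_VW hB) hBg) (hgrade hA hAg)
      (hgrade hB hBg)).eq_zero_of_le_ker (fun i => sup_le (sup_le (hV i) (hW i)) (hSp i))
      hgen hD_gen
  exact ⟨fun X => sub_eq_zero.mp (LinearMap.congr_fun hD0 X), hD0⟩

/-- Lemma 3.6(ii).  In `L = 𝕃(V ⊕ W ⊕ s(V⊗W))` with the derivations
`σ_A`, for all homogeneous `A, B ∈ 𝕃(V)` the derivations `σ_A` and `σ_B` commute in the
graded sense: `[σ_A, σ_B] = 0` in `Der(L)`, i.e.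
`σ_A σ_B (X) = (-1)^{(|A|+1)(|B|+1)} σ_B σ_A (X)` for every `X ∈ L`. -/
theorem statement7
    {Lc : Type u} [AddCommGroup Lc] [Module ℚ Lc] (G : GLA Lc)
    (V W Sp : ℤ → Submodule ℚ Lc)
    -- `V` and `W` are reduced graded vector spaces
    (hVred : ∀ i : ℤ, i ≤ 0 → V i = ⊥) (hWred : ∀ i : ℤ, i ≤ 0 → W i = ⊥)
    (hV : ∀ i, V i ≤ G.grade i) (hW : ∀ i, W i ≤ G.grade i) (hSp : ∀ i, Sp i ≤ G.grade i)
    -- the suspension `s(v ⊗ w)`, bilinear, of degree `|v|+|w|+1`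
    (sus : Lc →ₗ[ℚ] Lc →ₗ[ℚ] Lc)
    (hsus : ∀ {i j : ℤ} {v w : Lc}, v ∈ V i → w ∈ W j → sus v w ∈ Sp (i + j + 1))
    -- `L = 𝕃(V ⊕ W ⊕ s(V ⊗ W))` is generated by `V ⊕ W ⊕ s(V ⊗ W)`
    (hgen : G.lieSub (fun i => V i ⊔ W i ⊔ Sp i) = ⊤)
    -- the derivations `σ_A` for homogeneous `A ∈ 𝕃(V ⊕ W)`: `σ_A` has degree `|A| + 1`,
    -- `σ_v(w) = s(v⊗w)`, `σ_w(v) = (-1)^{|v||w|} s(v⊗w)`, `σ_v(v') = σ_w(w') = 0`,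
    -- `σ_v`, `σ_w` vanish on `s(V⊗W)`, and on generators
    -- `σ_A(v) = (-1)^{|v||A|} σ_v(A)`, `σ_A(w) = (-1)^{|w||A|} σ_w(A)`, `σ_A(s(v⊗w)) = 0`
    (sg : ℤ → Lc → (Lc →ₗ[ℚ] Lc))
    (hsg_grade : ∀ {a : ℤ} {A : Lc}, A ∈ G.lieSub (fun i => V i ⊔ W i) → A ∈ G.grade a →
      ∀ {n : ℤ} {x : Lc}, x ∈ G.grade n → sg a A x ∈ G.grade (n + a + 1))
    (hsg_der : ∀ {a : ℤ} {A : Lc}, A ∈ G.lieSub (fun i => V i ⊔ W i) → A ∈ G.grade a →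
      ∀ {n : ℤ} (x y : Lc), x ∈ G.grade n →
      sg a A (G.br x y) = G.br (sg a A x) y + (-1 : ℚ) ^ ((a + 1) * n) • G.br x (sg a A y))
    (hsg_vw : ∀ {i j : ℤ} {v w : Lc}, v ∈ V i → w ∈ W j → sg i v w = sus v w)
    (hsg_wv : ∀ {i j : ℤ} {v w : Lc}, v ∈ V i → w ∈ W j →
      sg j w v = (-1 : ℚ) ^ (i * j) • sus v w)
    (hsg_vv : ∀ {i i' : ℤ} {v v' : Lc}, v ∈ V i → v' ∈ V i' → sg i v v' = 0)
    (hsg_ww : ∀ {j j' : ℤ} {w w' : Lc}, w ∈ W j → w' ∈ W j' → sg j w w' = 0)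
    (hsg_vS : ∀ {i k : ℤ} {v x : Lc}, v ∈ V i → x ∈ Sp k → sg i v x = 0)
    (hsg_wS : ∀ {j k : ℤ} {w x : Lc}, w ∈ W j → x ∈ Sp k → sg j w x = 0)
    (hsg_Av : ∀ {a : ℤ} {A : Lc}, A ∈ G.lieSub (fun i => V i ⊔ W i) → A ∈ G.grade a →
      ∀ {i : ℤ} {v : Lc}, v ∈ V i → sg a A v = (-1 : ℚ) ^ (i * a) • sg i v A)
    (hsg_Aw : ∀ {a : ℤ} {A : Lc}, A ∈ G.lieSub (fun i => V i ⊔ W i) → A ∈ G.grade a →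
      ∀ {j : ℤ} {w : Lc}, w ∈ W j → sg a A w = (-1 : ℚ) ^ (j * a) • sg j w A)
    (hsg_AS : ∀ {a : ℤ} {A : Lc}, A ∈ G.lieSub (fun i => V i ⊔ W i) → A ∈ G.grade a →
      ∀ {k : ℤ} {x : Lc}, x ∈ Sp k → sg a A x = 0)
 :
    ∀ {a : ℤ} {A : Lc}, A ∈ G.lieSub V → A ∈ G.grade a →
    ∀ {b : ℤ} {B : Lc}, B ∈ G.lieSub V → B ∈ G.grade b →
      (∀ X : Lc, sg a A (sg b B X) = (-1 : ℚ) ^ ((a + 1) * (b + 1)) • sg b B (sg a A X)) ∧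
      (sg a A ∘ₗ sg b B - (-1 : ℚ) ^ ((a + 1) * (b + 1)) • (sg b B ∘ₗ sg a A) = 0) :=
  statement7_general G V W Sp hV hW hSp sus hsus hgen sg hsg_grade hsg_der hsg_wv hsg_vv hsg_Av
    hsg_Aw hsg_AS
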